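/- arXiv:1709.06619 — 2 statements merged into one kernel-verified Lean document; each statement's English description precedes it below -/
import Mathlib

section
/- Let β ∈ (0,1), s ∈ [0, β), ω ∈ [0, π/2) and c0 > 0, and for λ ∈ S_ω with Re λ ≥ c0 define F_λ(z) = e^{(1-β)z} λ^s (e^z + λ)^{-1}. Then F_λ is complex differentiable at every z ∈ ℂ with |Im z| ≤ π/2, and there exists a constant C > 0 depending only on β, s, ω and c0 such that for all such z, |F_λ'(z)| ≤ C e^{(1+s-β) Re z} when Re z > 0, and |F_λ'(z)| ≤ C e^{(1-β) Re z} when Re z ≤ 0. -/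
open Real Complex

/-!
On the band `|Im z| ≤ π/2` the point `e^z` lies in the closed right half-plane and `λ` in the
sector `S_ω`, so `|e^z + λ|² ≥ (1 - sin ω) (|e^z|² + |λ|²)`. Since
`F_λ' = F_λ · ((1 - β) - e^z / (e^z + λ))`, this bounds `|e^z / (e^z + λ)|` and
`|λ|^s / |e^z + λ| ≤ (1 + |λ|) / |e^z + λ|` by constants, whence
`|F_λ'(z)| ≤ C e^{(1-β) Re z}` on the whole band; for `Re z > 0` this is stronger than claimed.
-/

lemma Real.rpow_le_one_add {x s : ℝ} (hx : 0 ≤ x) (hs0 : 0 ≤ s) (hs1 : s ≤ 1) :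
    x ^ s ≤ 1 + x := by
  rcases le_total x 1 with h | h
  · linarith [Real.rpow_le_one hx h hs0]
  · linarith [Real.rpow_le_self_of_one_le h hs1]

lemma Real.sqrt_one_sub_sin_pos {ω : ℝ} (h0 : 0 ≤ ω) (h : ω < π / 2) :
    0 < √(1 - Real.sin ω) := by
  have : Real.sin ω < 1 := by
    simpa using Real.sin_lt_sin_of_lt_of_le_pi_div_two (by linarith) le_rfl h
  exact Real.sqrt_pos.2 (by linarith)

namespace Complex

lemma re_exp_nonneg {z : ℂ} (hz : |z.im| ≤ π / 2) : 0 ≤ (exp z).re := by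
  rw [exp_re]
  exact mul_nonneg (Real.exp_pos _).le (Real.cos_nonneg_of_mem_Icc (abs_le.1 hz))

lemma abs_im_le_sin_mul_norm {b : ℂ} {ω : ℝ} (hb : |arg b| ≤ ω) (hω : ω ≤ π / 2) :
    |b.im| ≤ Real.sin ω * ‖b‖ := by
  have hsin : |Real.sin (arg b)| ≤ Real.sin ω := by
    rw [Real.abs_sin_eq_sin_abs_of_abs_le_pi (abs_arg_le_pi b)]
    exact Real.sin_le_sin_of_le_of_le_pi_div_two
      (by linarith [abs_nonneg (arg b), Real.pi_pos]) hω hb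
  rw [← norm_mul_sin_arg, abs_mul, abs_norm, mul_comm]
  exact mul_le_mul_of_nonneg_right hsin (norm_nonneg b)

/-- The angle between `a` and `b` is at most `π/2 + ω`, so `2 Re (a b̄) ≥ -2 sin ω ‖a‖ ‖b‖`,
and `2 ‖a‖ ‖b‖ ≤ ‖a‖² + ‖b‖²`. -/
lemma one_sub_sin_mul_sq_add_sq_le_norm_add_sq {a b : ℂ} {ω : ℝ} (ha : 0 ≤ a.re)
    (hb : |arg b| ≤ ω) (hω : ω ≤ π / 2) :
    (1 - Real.sin ω) * (‖a‖ ^ 2 + ‖b‖ ^ 2) ≤ ‖a + b‖ ^ 2 := by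
  have hbre : 0 ≤ b.re := abs_arg_le_pi_div_two_iff.1 (hb.trans hω)
  have hsin : 0 ≤ Real.sin ω :=
    Real.sin_nonneg_of_nonneg_of_le_pi ((abs_nonneg _).trans hb) (by linarith [Real.pi_pos])
  have him : |a.im * b.im| ≤ ‖a‖ * (Real.sin ω * ‖b‖) := by
    rw [abs_mul]
    exact mul_le_mul (abs_im_le_norm a) (abs_im_le_sin_mul_norm hb hω) (abs_nonneg _)
      (norm_nonneg _)
  have hexpand : ‖a + b‖ ^ 2 = ‖a‖ ^ 2 + ‖b‖ ^ 2 + 2 * (a.re * b.re + a.im * b.im) := by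
    simp only [Complex.sq_norm, normSq_apply, add_re, add_im]
    ring
  nlinarith [abs_le.1 him, mul_nonneg ha hbre, mul_nonneg hsin (sq_nonneg (‖a‖ - ‖b‖))]

lemma sqrt_one_sub_sin_mul_max_le_norm_add {a b : ℂ} {ω : ℝ} (ha : 0 ≤ a.re)
    (hb : |arg b| ≤ ω) (hω : ω ≤ π / 2) :
    √(1 - Real.sin ω) * max ‖a‖ ‖b‖ ≤ ‖a + b‖ := by
  have hmax : max ‖a‖ ‖b‖ ^ 2 ≤ ‖a‖ ^ 2 + ‖b‖ ^ 2 := by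
    rcases max_choice ‖a‖ ‖b‖ with h | h <;> rw [h] <;> nlinarith [sq_nonneg ‖a‖, sq_nonneg ‖b‖]
  refine le_of_pow_le_pow_left₀ two_ne_zero (norm_nonneg _) ?_
  rw [mul_pow, Real.sq_sqrt (by linarith [Real.sin_le_one ω])]
  calc (1 - Real.sin ω) * max ‖a‖ ‖b‖ ^ 2 ≤ (1 - Real.sin ω) * (‖a‖ ^ 2 + ‖b‖ ^ 2) :=
        mul_le_mul_of_nonneg_left hmax (by linarith [Real.sin_le_one ω])
    _ ≤ ‖a + b‖ ^ 2 := one_sub_sin_mul_sq_add_sq_le_norm_add_sq ha hb hω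

lemma hasDerivAt_exp_mul_mul_inv_exp_add (α c lam : ℂ) {z : ℂ} (hz : exp z + lam ≠ 0) :
    HasDerivAt (fun w => exp (α * w) * c * (exp w + lam)⁻¹)
      (exp (α * z) * c * (exp z + lam)⁻¹ * (α - exp z * (exp z + lam)⁻¹)) z := by
  have hexp : HasDerivAt (fun w => exp (α * w)) (exp (α * z) * α) z := by
    simpa using ((hasDerivAt_id z).const_mul α).cexp
  have hinv : HasDerivAt (fun w => (exp w + lam)⁻¹) (-exp z / (exp z + lam) ^ 2) z :=
    ((hasDerivAt_exp z).add_const lam).inv hz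
  refine ((hexp.mul_const c).mul hinv).congr_deriv ?_
  field_simp
  ring

section Sector

variable {ω c0 : ℝ} {lam z : ℂ}

lemma le_norm_exp_add (hz : |z.im| ≤ π / 2) (hre : c0 ≤ lam.re) : c0 ≤ ‖exp z + lam‖ :=
  calc c0 ≤ (exp z + lam).re := by rw [add_re]; linarith [re_exp_nonneg hz]
    _ ≤ ‖exp z + lam‖ := re_le_norm _

lemma norm_exp_mul_inv_exp_add_le (hz : |z.im| ≤ π / 2) (hc0 : 0 < c0) (hre : c0 ≤ lam.re)
    (harg : |arg lam| ≤ ω) (hω : ω < π / 2) :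
    ‖exp z * (exp z + lam)⁻¹‖ ≤ (√(1 - Real.sin ω))⁻¹ := by
  have hk := Real.sqrt_one_sub_sin_pos ((abs_nonneg _).trans harg) hω
  have hm := hc0.trans_le (le_norm_exp_add hz hre)
  rw [norm_mul, norm_inv, ← div_eq_mul_inv, div_le_iff₀ hm, inv_mul_eq_div, le_div_iff₀ hk,
    mul_comm]
  exact (mul_le_mul_of_nonneg_left (le_max_left _ _) hk.le).trans
    (sqrt_one_sub_sin_mul_max_le_norm_add (re_exp_nonneg hz) harg hω.le)

lemma norm_cpow_mul_inv_exp_add_le {s : ℝ} (hs0 : 0 ≤ s) (hs1 : s ≤ 1) (hz : |z.im| ≤ π / 2)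
    (hc0 : 0 < c0) (hre : c0 ≤ lam.re) (harg : |arg lam| ≤ ω) (hω : ω < π / 2) :
    ‖lam ^ (s : ℂ)‖ * ‖(exp z + lam)⁻¹‖ ≤ c0⁻¹ + (√(1 - Real.sin ω))⁻¹ := by
  have hk := Real.sqrt_one_sub_sin_pos ((abs_nonneg _).trans harg) hω
  have hmc := le_norm_exp_add hz hre
  have hmL : √(1 - Real.sin ω) * ‖lam‖ ≤ ‖exp z + lam‖ :=
    (mul_le_mul_of_nonneg_left (le_max_right _ _) hk.le).trans
      (sqrt_one_sub_sin_mul_max_le_norm_add (re_exp_nonneg hz) harg hω.le)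
  have hm := hc0.trans_le hmc
  rw [norm_cpow_real, norm_inv, ← div_eq_mul_inv, div_le_iff₀ hm]
  have h1 : 1 ≤ c0⁻¹ * ‖exp z + lam‖ := by rw [inv_mul_eq_div, one_le_div hc0]; exact hmc
  have h2 : ‖lam‖ ≤ (√(1 - Real.sin ω))⁻¹ * ‖exp z + lam‖ := by
    rw [inv_mul_eq_div, le_div_iff₀ hk, mul_comm]; exact hmL
  calc ‖lam‖ ^ s ≤ 1 + ‖lam‖ := Real.rpow_le_one_add (norm_nonneg _) hs0 hs1
    _ ≤ _ := by rw [add_mul]; linarith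

lemma exp_add_ne_zero_of_re_pos (hz : |z.im| ≤ π / 2) (hre : 0 < lam.re) : exp z + lam ≠ 0 :=
  norm_ne_zero_iff.1 (hre.trans_le (le_norm_exp_add hz le_rfl)).ne'

lemma norm_integrand_deriv_le {β s : ℝ} (hβ : β ≤ 1) (hs0 : 0 ≤ s) (hs1 : s ≤ 1)
    (hz : |z.im| ≤ π / 2) (hc0 : 0 < c0) (hre : c0 ≤ lam.re) (harg : |arg lam| ≤ ω)
    (hω : ω < π / 2) :
    ‖exp ((1 - β : ℂ) * z) * lam ^ (s : ℂ) * (exp z + lam)⁻¹ *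
        ((1 - β : ℂ) - exp z * (exp z + lam)⁻¹)‖ ≤
      (c0⁻¹ + (√(1 - Real.sin ω))⁻¹) * (1 - β + (√(1 - Real.sin ω))⁻¹) *
        Real.exp ((1 - β) * z.re) := by
  have hexp : ‖exp ((1 - β : ℂ) * z)‖ = Real.exp ((1 - β) * z.re) := by
    rw [norm_exp, ← ofReal_one, ← ofReal_sub, re_ofReal_mul]
  have hfactor : ‖(1 - β : ℂ) - exp z * (exp z + lam)⁻¹‖ ≤ 1 - β + (√(1 - Real.sin ω))⁻¹ := by
    refine (norm_sub_le _ _).trans (add_le_add (le_of_eq ?_)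
      (norm_exp_mul_inv_exp_add_le hz hc0 hre harg hω))
    rw [← ofReal_one, ← ofReal_sub, norm_real, Real.norm_of_nonneg (by linarith)]
  calc _ = ‖lam ^ (s : ℂ)‖ * ‖(exp z + lam)⁻¹‖ * ‖(1 - β : ℂ) - exp z * (exp z + lam)⁻¹‖ *
        Real.exp ((1 - β) * z.re) := by
        rw [norm_mul, norm_mul, norm_mul, hexp]
        ring
    _ ≤ _ := by
      gcongr
      exact norm_cpow_mul_inv_exp_add_le hs0 hs1 hz hc0 hre harg hω

end Sector

end Complex

theorem scalar_integrand_deriv_estimate_general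
    (β s ω c0 : ℝ) (hβ : β ∈ Set.Ioo 0 1) (hs : s ∈ Set.Ico 0 β)
    (hωlt : ω < π / 2) (hc0 : 0 < c0) :
    ∃ C : ℝ, 0 < C ∧
      ∀ lam : ℂ, lam ≠ 0 → |Complex.arg lam| ≤ ω → c0 ≤ lam.re →
        (∀ z : ℂ, |z.im| ≤ π / 2 →
          DifferentiableAt ℂ
            (fun w : ℂ => Complex.exp (((1 : ℂ) - β) * w) * lam ^ (s : ℂ) *
              (Complex.exp w + lam)⁻¹) z) ∧
        ∀ z : ℂ, |z.im| ≤ π / 2 →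
          (0 < z.re →
            ‖deriv
              (fun w : ℂ => Complex.exp (((1 : ℂ) - β) * w) * lam ^ (s : ℂ) *
                (Complex.exp w + lam)⁻¹) z‖ ≤ C * Real.exp ((1 + s - β) * z.re)) ∧
          (z.re ≤ 0 →
            ‖deriv
              (fun w : ℂ => Complex.exp (((1 : ℂ) - β) * w) * lam ^ (s : ℂ) *
                (Complex.exp w + lam)⁻¹) z‖ ≤ C * Real.exp ((1 - β) * z.re)) := by
  have hs1 : s ≤ 1 := (hs.2.trans hβ.2).le
  have hC : 0 < (c0⁻¹ + (√(1 - Real.sin ω))⁻¹) * (1 - β + (√(1 - Real.sin ω))⁻¹) :=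
    mul_pos (by positivity) (add_pos_of_pos_of_nonneg (sub_pos.2 hβ.2) (by positivity))
  refine ⟨_, hC, fun lam _ harg hre => ?_⟩
  have hF := fun (z : ℂ) (hz : |z.im| ≤ π / 2) =>
    hasDerivAt_exp_mul_mul_inv_exp_add ((1 : ℂ) - β) (lam ^ (s : ℂ)) lam
      (exp_add_ne_zero_of_re_pos hz (hc0.trans_le hre))
  refine ⟨fun z hz => (hF z hz).differentiableAt, fun z hz => ?_⟩
  have hbound := norm_integrand_deriv_le hβ.2.le hs.1 hs1 hz hc0 hre harg hωlt
  rw [(hF z hz).deriv]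
  refine ⟨fun hz0 => hbound.trans ?_, fun _ => hbound⟩
  exact mul_le_mul_of_nonneg_left (Real.exp_le_exp.2 (by nlinarith [hs.1])) hC.le

/-- Differentiability and derivative bound for the integrand
`F_λ(z) = e^{(1-β)z} λ^s (e^z + λ)⁻¹` on the band `|Im z| ≤ π/2`. -/
theorem scalar_integrand_deriv_estimate
    (β s ω c0 : ℝ) (hβ : β ∈ Set.Ioo 0 1) (hs : s ∈ Set.Ico 0 β)
    (hω0 : 0 ≤ ω) (hωlt : ω < π / 2) (hc0 : 0 < c0) :
    ∃ C : ℝ, 0 < C ∧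
      ∀ lam : ℂ, lam ≠ 0 → |Complex.arg lam| ≤ ω → c0 ≤ lam.re →
        (∀ z : ℂ, |z.im| ≤ π / 2 →
          DifferentiableAt ℂ
            (fun w : ℂ => Complex.exp (((1 : ℂ) - β) * w) * lam ^ (s : ℂ) *
              (Complex.exp w + lam)⁻¹) z) ∧
        ∀ z : ℂ, |z.im| ≤ π / 2 →
          (0 < z.re →
            ‖deriv
              (fun w : ℂ => Complex.exp (((1 : ℂ) - β) * w) * lam ^ (s : ℂ) *
                (Complex.exp w + lam)⁻¹) z‖ ≤ C * Real.exp ((1 + s - β) * z.re)) ∧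
          (z.re ≤ 0 →
            ‖deriv
              (fun w : ℂ => Complex.exp (((1 : ℂ) - β) * w) * lam ^ (s : ℂ) *
                (Complex.exp w + lam)⁻¹) z‖ ≤ C * Real.exp ((1 - β) * z.re)) :=
  scalar_integrand_deriv_estimate_general β s ω c0 hβ hs hωlt hc0
end

section
/- Let β ∈ (0,1), s ∈ [0, β), ω ∈ [0, π/2) and c0 > 0. For every λ ∈ S_ω with Re λ ≥ c0, every k > 0 and all nonnegative integers N and M: k Σ_{ℓ = N+1}^{∞} e^{(1-β)ℓk} |λ|^s |(e^{ℓk} + λ)^{-1}| ≤ (cos ω)^{-1} (β - s)^{-1} e^{-(β - s) N k}, and k Σ_{ℓ = -∞}^{-M-1} e^{(1-β)ℓk} |λ|^s |(e^{ℓk} + λ)^{-1}| ≤ c0^{s-1} (cos ω)^{-1} (1 - β)^{-1} e^{-(1-β) M k}. -/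
open Real Complex

/-! Both tails are compared with geometric series. Write `t = e^{ℓk}`. Since `λ` lies in the
sector `S_ω`, `|t + λ| ≥ Re (t + λ) ≥ cos ω · (t + |λ|)`. For the upper tail, weighted AM-GM gives
`t^{1-s} |λ|^s ≤ t + |λ|`, so the `ℓ`-th term is at most `(cos ω)⁻¹ e^{-(β-s)ℓk}`; for the lower
tail, `|t + λ| ≥ cos ω · |λ|` and `|λ| ≥ Re λ ≥ c0` give the bound `c0^{s-1} (cos ω)⁻¹ e^{(1-β)ℓk}`.
Finally `k ∑_{j ≥ 0} e^{-a(P+1+j)k} = k e^{-aPk} r/(1-r)` with `r = e^{-ak}`, and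
`ak · r ≤ 1 - r` is `1 + ak ≤ e^{ak}`. -/

lemma mul_exp_neg_le_one_sub_exp_neg (t : ℝ) : t * Real.exp (-t) ≤ 1 - Real.exp (-t) := by
  have h := Real.add_one_le_exp t
  have hinv : Real.exp t * Real.exp (-t) = 1 := by
    rw [← Real.exp_add, add_neg_cancel, Real.exp_zero]
  nlinarith [Real.exp_pos (-t)]

lemma exp_neg_mul_add_nat (a k P : ℝ) (j : ℕ) :
    Real.exp (-a * ((P + 1 + j) * k)) = Real.exp (-a * P * k) * Real.exp (-(a * k)) ^ (j + 1) := by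
  rw [← Real.exp_nat_mul, ← Real.exp_add]
  push_cast
  ring_nf

section GeometricTail

variable {a k : ℝ}

lemma summable_exp_neg_mul_add_nat (ha : 0 < a) (hk : 0 < k) (P : ℝ) :
    Summable fun j : ℕ => Real.exp (-a * ((P + 1 + j) * k)) := by
  have hr : Real.exp (-(a * k)) < 1 := Real.exp_lt_one_iff.2 (by nlinarith)
  simp_rw [exp_neg_mul_add_nat, pow_succ]
  exact (((summable_geometric_of_lt_one (Real.exp_pos _).le hr).mul_right _).mul_left _)

lemma mul_tsum_exp_neg_mul_add_nat_le (ha : 0 < a) (hk : 0 < k) (P : ℝ) :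
    k * ∑' j : ℕ, Real.exp (-a * ((P + 1 + j) * k)) ≤ a⁻¹ * Real.exp (-a * P * k) := by
  set r := Real.exp (-(a * k))
  have hr : r < 1 := Real.exp_lt_one_iff.2 (by nlinarith)
  have hsum : ∑' j : ℕ, Real.exp (-a * ((P + 1 + j) * k))
      = Real.exp (-a * P * k) * (r / (1 - r)) := by
    simp_rw [exp_neg_mul_add_nat, pow_succ, tsum_mul_left, tsum_mul_right,
      tsum_geometric_of_lt_one (Real.exp_pos _).le hr, div_eq_inv_mul]
    rfl
  have hkr : k * (r / (1 - r)) ≤ a⁻¹ := by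
    rw [mul_div_assoc', div_le_iff₀ (sub_pos.2 hr), inv_mul_eq_div, le_div_iff₀ ha]
    linarith [mul_exp_neg_le_one_sub_exp_neg (a * k)]
  rw [hsum, mul_left_comm, mul_comm a⁻¹]
  exact mul_le_mul_of_nonneg_left hkr (Real.exp_pos _).le

lemma mul_tsum_le_of_le_exp_neg_mul_add_nat (ha : 0 < a) (hk : 0 < k) {C : ℝ} (hC : 0 ≤ C)
    (P : ℝ) {f : ℕ → ℝ} (hf0 : ∀ j, 0 ≤ f j)
    (hf : ∀ j, f j ≤ C * Real.exp (-a * ((P + 1 + j) * k))) :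
    k * ∑' j, f j ≤ C * a⁻¹ * Real.exp (-a * P * k) := by
  have hg := (summable_exp_neg_mul_add_nat ha hk P).mul_left C
  calc k * ∑' j, f j ≤ k * ∑' j : ℕ, C * Real.exp (-a * ((P + 1 + j) * k)) :=
        mul_le_mul_of_nonneg_left (hg.of_nonneg_of_le hf0 hf |>.tsum_le_tsum hf hg) hk.le
    _ = C * (k * ∑' j : ℕ, Real.exp (-a * ((P + 1 + j) * k))) := by rw [tsum_mul_left]; ring
    _ ≤ C * (a⁻¹ * Real.exp (-a * P * k)) :=
        mul_le_mul_of_nonneg_left (mul_tsum_exp_neg_mul_add_nat_le ha hk P) hC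
    _ = C * a⁻¹ * Real.exp (-a * P * k) := by ring

end GeometricTail

section Sector

variable {ω : ℝ} {z : ℂ}

lemma cos_pos_of_abs_arg_le (hω : ω < π / 2) (harg : |arg z| ≤ ω) : 0 < Real.cos ω :=
  Real.cos_pos_of_mem_Ioo ⟨by linarith [abs_nonneg (arg z), Real.pi_pos], hω⟩

lemma cos_mul_norm_le_re (hω : ω ≤ π) (harg : |arg z| ≤ ω) : Real.cos ω * ‖z‖ ≤ z.re := by
  have hcos : Real.cos ω ≤ Real.cos (arg z) := by
    rw [← Real.cos_abs (arg z)]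
    exact Real.cos_le_cos_of_nonneg_of_le_pi (abs_nonneg _) hω harg
  rw [← norm_mul_cos_arg z, mul_comm]
  exact mul_le_mul_of_nonneg_left hcos (norm_nonneg z)

lemma cos_mul_add_norm_le_norm_add (hω : ω < π / 2) (harg : |arg z| ≤ ω) {t : ℝ} (ht : 0 ≤ t) :
    Real.cos ω * (t + ‖z‖) ≤ ‖(t : ℂ) + z‖ := by
  have hre := cos_mul_norm_le_re (by linarith [Real.pi_pos]) harg
  have hle := Complex.re_le_norm ((t : ℂ) + z)
  rw [Complex.add_re, Complex.ofReal_re] at hle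
  nlinarith [Real.cos_le_one ω]

lemma exp_mul_rpow_norm_mul_norm_inv_exp_add_le (hω : ω < π / 2) (harg : |arg z| ≤ ω)
    {s : ℝ} (hs0 : 0 ≤ s) (hs1 : s ≤ 1) (β x : ℝ) :
    Real.exp ((1 - β) * x) * ‖z‖ ^ s * ‖(Complex.exp (x : ℂ) + z)⁻¹‖
      ≤ (Real.cos ω)⁻¹ * Real.exp (-(β - s) * x) := by
  have hcos := cos_pos_of_abs_arg_le hω harg
  have hsector : Real.cos ω * (Real.exp x + ‖z‖) ≤ ‖Complex.exp (x : ℂ) + z‖ := by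
    simpa [← Complex.ofReal_exp] using cos_mul_add_norm_le_norm_add hω harg (Real.exp_pos x).le
  have hpos : 0 < ‖Complex.exp (x : ℂ) + z‖ := lt_of_lt_of_le (by positivity) hsector
  have hamgm : Real.exp ((1 - s) * x) * ‖z‖ ^ s ≤ Real.exp x + ‖z‖ := by
    have h := Real.geom_mean_le_arith_mean2_weighted (sub_nonneg.2 hs1) hs0
      (Real.exp_pos x).le (norm_nonneg z) (sub_add_cancel 1 s)
    rw [← Real.exp_mul, mul_comm x] at h
    nlinarith [Real.exp_pos x, norm_nonneg z]
  have hsplit : Real.exp ((1 - β) * x) = Real.exp (-(β - s) * x) * Real.exp ((1 - s) * x) := by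
    rw [← Real.exp_add]; ring_nf
  rw [norm_inv, ← div_eq_mul_inv, div_le_iff₀ hpos]
  calc Real.exp ((1 - β) * x) * ‖z‖ ^ s
      = Real.exp (-(β - s) * x) * (Real.exp ((1 - s) * x) * ‖z‖ ^ s) := by rw [hsplit]; ring
    _ ≤ Real.exp (-(β - s) * x) * ((Real.cos ω)⁻¹ * ‖Complex.exp (x : ℂ) + z‖) :=
        mul_le_mul_of_nonneg_left (hamgm.trans ((le_inv_mul_iff₀ hcos).2 hsector))
          (Real.exp_pos _).le
    _ = (Real.cos ω)⁻¹ * Real.exp (-(β - s) * x) * ‖Complex.exp (x : ℂ) + z‖ := by ring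

lemma exp_mul_rpow_norm_mul_norm_inv_exp_add_le_of_le_re (hω : ω < π / 2)
    (harg : |arg z| ≤ ω) {c : ℝ} (hc : 0 < c) (hre : c ≤ z.re) {s : ℝ} (hs1 : s ≤ 1) (p x : ℝ) :
    Real.exp (p * x) * ‖z‖ ^ s * ‖(Complex.exp (x : ℂ) + z)⁻¹‖
      ≤ c ^ (s - 1) * (Real.cos ω)⁻¹ * Real.exp (p * x) := by
  have hcos := cos_pos_of_abs_arg_le hω harg
  have hz : c ≤ ‖z‖ := hre.trans (Complex.re_le_norm z)
  have hzpos : 0 < ‖z‖ := hc.trans_le hz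
  have hsector : Real.cos ω * ‖z‖ ≤ ‖Complex.exp (x : ℂ) + z‖ := by
    have h := cos_mul_add_norm_le_norm_add hω harg (Real.exp_pos x).le
    rw [Complex.ofReal_exp] at h
    nlinarith [Real.exp_pos x]
  have hbound : ‖z‖ ^ s * ‖(Complex.exp (x : ℂ) + z)⁻¹‖ ≤ c ^ (s - 1) * (Real.cos ω)⁻¹ :=
    calc ‖z‖ ^ s * ‖(Complex.exp (x : ℂ) + z)⁻¹‖ ≤ ‖z‖ ^ s * (Real.cos ω * ‖z‖)⁻¹ := by
          rw [norm_inv]; gcongr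
      _ = ‖z‖ ^ (s - 1) * (Real.cos ω)⁻¹ := by
          rw [Real.rpow_sub_one hzpos.ne']; field_simp
      _ ≤ c ^ (s - 1) * (Real.cos ω)⁻¹ :=
          mul_le_mul_of_nonneg_right (Real.rpow_le_rpow_of_nonpos hc hz (by linarith))
            (inv_nonneg.2 hcos.le)
  rw [mul_assoc, mul_comm]
  exact mul_le_mul_of_nonneg_right hbound (Real.exp_pos _).le

end Sector

theorem scalar_sinc_tail_bounds_general
    (β s ω c0 : ℝ) (hβ : β ∈ Set.Ioo 0 1) (hs : s ∈ Set.Ico 0 β)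
    (hωlt : ω < π / 2) (hc0 : 0 < c0)
    (lam : ℂ) (harg : |Complex.arg lam| ≤ ω) (hre : c0 ≤ lam.re)
    (k : ℝ) (hk : 0 < k) (N M : ℕ) :
    (k * ∑' j : ℕ,
        Real.exp ((1 - β) * (((N : ℝ) + 1 + j) * k)) * ‖lam‖ ^ s *
          ‖(Complex.exp (((((N : ℝ) + 1 + j) * k : ℝ)) : ℂ) + lam)⁻¹‖
      ≤ (Real.cos ω)⁻¹ * (β - s)⁻¹ * Real.exp (-(β - s) * N * k)) ∧
    (k * ∑' j : ℕ,
        Real.exp ((1 - β) * ((-((M : ℝ) + 1 + j)) * k)) * ‖lam‖ ^ s *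
          ‖(Complex.exp ((((-((M : ℝ) + 1 + j)) * k : ℝ)) : ℂ) + lam)⁻¹‖
      ≤ c0 ^ (s - 1) * (Real.cos ω)⁻¹ * (1 - β)⁻¹ * Real.exp (-(1 - β) * M * k)) := by
  obtain ⟨-, hβ1⟩ := hβ
  obtain ⟨hs0, hsβ⟩ := hs
  have hcos := cos_pos_of_abs_arg_le hωlt harg
  constructor
  · refine mul_tsum_le_of_le_exp_neg_mul_add_nat (sub_pos.2 hsβ) hk (by positivity) N
      (fun j => by positivity) fun j => ?_
    exact exp_mul_rpow_norm_mul_norm_inv_exp_add_le hωlt harg hs0 (hsβ.le.trans hβ1.le) β _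
  · refine mul_tsum_le_of_le_exp_neg_mul_add_nat (sub_pos.2 hβ1) hk (by positivity) M
      (fun j => by positivity) fun j => ?_
    refine (exp_mul_rpow_norm_mul_norm_inv_exp_add_le_of_le_re hωlt harg hc0 hre
      (hsβ.le.trans hβ1.le) (1 - β) _).trans_eq ?_
    ring_nf

/-- Scalar truncation (tail) bounds from Step 1 of the proof of Theorem 3.2:
the upper tail `ℓ ≥ N+1` and lower tail `ℓ ≤ -M-1` of the sinc quadrature sum
are bounded by `(cos ω)⁻¹ (β-s)⁻¹ e^{-(β-s)Nk}` and
`c0^{s-1} (cos ω)⁻¹ (1-β)⁻¹ e^{-(1-β)Mk}` respectively. -/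
theorem scalar_sinc_tail_bounds
    (β s ω c0 : ℝ) (hβ : β ∈ Set.Ioo 0 1) (hs : s ∈ Set.Ico 0 β)
    (hω0 : 0 ≤ ω) (hωlt : ω < π / 2) (hc0 : 0 < c0)
    (lam : ℂ) (hlam : lam ≠ 0) (harg : |Complex.arg lam| ≤ ω) (hre : c0 ≤ lam.re)
    (k : ℝ) (hk : 0 < k) (N M : ℕ) :
    (k * ∑' j : ℕ,
        Real.exp ((1 - β) * (((N : ℝ) + 1 + j) * k)) * ‖lam‖ ^ s *
          ‖(Complex.exp (((((N : ℝ) + 1 + j) * k : ℝ)) : ℂ) + lam)⁻¹‖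
      ≤ (Real.cos ω)⁻¹ * (β - s)⁻¹ * Real.exp (-(β - s) * N * k)) ∧
    (k * ∑' j : ℕ,
        Real.exp ((1 - β) * ((-((M : ℝ) + 1 + j)) * k)) * ‖lam‖ ^ s *
          ‖(Complex.exp ((((-((M : ℝ) + 1 + j)) * k : ℝ)) : ℂ) + lam)⁻¹‖
      ≤ c0 ^ (s - 1) * (Real.cos ω)⁻¹ * (1 - β)⁻¹ * Real.exp (-(1 - β) * M * k)) :=
  scalar_sinc_tail_bounds_general β s ω c0 hβ hs hωlt hc0 lam harg hre k hk N M
end
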